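/- (Lemma 6, type C.) Let n ≥ 2, let e_1, …, e_n be the standard basis of ℤ^n, let Δ_+ = { e_a − e_b : 1 ≤ a < b ≤ n } ∪ { e_a + e_b : 1 ≤ a < b ≤ n } ∪ { 2e_a : 1 ≤ a ≤ n }, let the simple roots be α_a = e_a − e_{a+1} for 1 ≤ a ≤ n−1 together with α_n = 2e_n, and let α_max = 2e_1. Then there do not exist ξ, ζ ∈ Δ_+, a nonempty set S of simple roots, and positive integers (m_s)_{s∈S} such that α_max = ξ + ζ + Σ_{s∈S} m_s·s, ξ + ζ ∉ Δ_+, and for every s ∈ S both ξ + s ∉ Δ_+ and ζ + s ∉ Δ_+. -/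

import Mathlib

/-- The standard basis vector `e_a` of `ℤ^n`. -/
def stdBasis (n : ℕ) (a : Fin n) : Fin n → ℤ := Pi.single a 1

/-- The positive roots of type `C_n` realized in `ℤ^n`:
`Δ_+ = { e_a − e_b, e_a + e_b : a < b } ∪ { 2e_a }`. -/
def posRootsC (n : ℕ) : Set (Fin n → ℤ) :=
  {v | (∃ a b : Fin n, a < b ∧
          (v = stdBasis n a - stdBasis n b ∨ v = stdBasis n a + stdBasis n b)) ∨
        ∃ a : Fin n, v = (2 : ℤ) • stdBasis n a}

/-- The simple roots of type `C_n`: `α_a = e_a − e_{a+1}` for `a < n`, and `α_n = 2e_n`. -/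
def simpleRootsC (n : ℕ) (hn : 2 ≤ n) : Set (Fin n → ℤ) :=
  {v | (∃ a b : Fin n, (b : ℕ) = (a : ℕ) + 1 ∧ v = stdBasis n a - stdBasis n b) ∨
        v = (2 : ℤ) • stdBasis n ⟨n - 1, by omega⟩}

/-!
If `ξ` and `s` are positive roots of `C_n` with `⟪ξ, s⟫ < 0`, then `ξ + s` is again a positive
root. So the hypotheses force `⟪ξ + ζ, σ⟫ ≥ 0` for `σ = Σ m_s s = 2e₁ - (ξ + ζ)`, which says
`‖ξ + ζ - e₁‖² ≤ 1`. Hence `ξ + ζ` is `e₁` (impossible: positive roots have even coordinate sum),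
`0` (impossible: positive roots pair positively with `(n, n - 1, …, 1)`), `e₁ + e_k`, or
`e₁ - e_k` with `k > 1`; the last two are positive roots.
-/

section

variable {n : ℕ}

theorem stdBasis_apply (a i : Fin n) : stdBasis n a i = if i = a then 1 else 0 :=
  Pi.single_apply a 1 i

theorem dotProduct_stdBasis (v : Fin n → ℤ) (a : Fin n) : v ⬝ᵥ stdBasis n a = v a :=
  dotProduct_single_one v a

theorem stdBasis_dotProduct (a : Fin n) (v : Fin n → ℤ) : stdBasis n a ⬝ᵥ v = v a :=
  single_one_dotProduct a v

theorem sub_mem_posRootsC {a b : Fin n} (h : a < b) :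
    stdBasis n a - stdBasis n b ∈ posRootsC n :=
  Or.inl ⟨a, b, h, Or.inl rfl⟩

theorem add_mem_posRootsC (a b : Fin n) : stdBasis n a + stdBasis n b ∈ posRootsC n := by
  rcases lt_trichotomy a b with h | rfl | h
  · exact Or.inl ⟨a, b, h, Or.inr rfl⟩
  · exact Or.inr ⟨a, (two_smul ℤ _).symm⟩
  · exact Or.inl ⟨b, a, h, Or.inr (add_comm _ _)⟩

theorem mem_posRootsC_iff {v : Fin n → ℤ} :
    v ∈ posRootsC n ↔ (∃ a b, a < b ∧ v = stdBasis n a - stdBasis n b) ∨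
      ∃ a b, v = stdBasis n a + stdBasis n b := by
  constructor
  · rintro (⟨a, b, hab, rfl | rfl⟩ | ⟨a, rfl⟩)
    · exact Or.inl ⟨a, b, hab, rfl⟩
    · exact Or.inr ⟨a, b, rfl⟩
    · exact Or.inr ⟨a, a, two_smul ℤ _⟩
  · rintro (⟨a, b, hab, rfl⟩ | ⟨a, b, rfl⟩)
    · exact sub_mem_posRootsC hab
    · exact add_mem_posRootsC a b

theorem simpleRootsC_subset_posRootsC (hn : 2 ≤ n) : simpleRootsC n hn ⊆ posRootsC n := by
  rintro v (⟨a, b, hab, rfl⟩ | rfl)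
  · exact sub_mem_posRootsC (Fin.lt_def.2 (by omega))
  · exact Or.inr ⟨_, rfl⟩

theorem add_sub_mem_posRootsC_of_apply_lt {ξ : Fin n → ℤ} (hξ : ξ ∈ posRootsC n) {k l : Fin n}
    (hkl : k < l) (h : ξ k < ξ l) : ξ + (stdBasis n k - stdBasis n l) ∈ posRootsC n := by
  have hlk : l ≠ k := hkl.ne'
  rcases mem_posRootsC_iff.1 hξ with ⟨a, b, hab, rfl⟩ | ⟨a, b, rfl⟩
  · have : a = l ∨ b = k := by
      by_contra! H
      simp only [Pi.sub_apply, stdBasis_apply] at h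
      split_ifs at h <;> simp_all
    rcases this with rfl | rfl
    · convert sub_mem_posRootsC (hkl.trans hab) using 1; abel
    · convert sub_mem_posRootsC (hab.trans hkl) using 1; abel
  · have : a = l ∨ b = l := by
      by_contra! H
      simp only [Pi.add_apply, stdBasis_apply] at h
      split_ifs at h <;> simp_all
    rcases this with rfl | rfl
    · convert add_mem_posRootsC k b using 1; abel
    · convert add_mem_posRootsC a k using 1; abel

theorem add_add_mem_posRootsC_of_apply_add_neg {ξ : Fin n → ℤ} (hξ : ξ ∈ posRootsC n)
    {k l : Fin n} (h : ξ k + ξ l < 0) : ξ + (stdBasis n k + stdBasis n l) ∈ posRootsC n := by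
  rcases mem_posRootsC_iff.1 hξ with ⟨a, b, -, rfl⟩ | ⟨a, b, rfl⟩
  · have : b = k ∨ b = l := by
      by_contra! H
      simp only [Pi.sub_apply, stdBasis_apply] at h
      split_ifs at h <;> simp_all
    rcases this with rfl | rfl
    · convert add_mem_posRootsC a l using 1; abel
    · convert add_mem_posRootsC a k using 1; abel
  · simp only [Pi.add_apply, stdBasis_apply] at h
    split_ifs at h <;> omega

theorem add_mem_posRootsC_of_dotProduct_neg {ξ s : Fin n → ℤ} (hξ : ξ ∈ posRootsC n)
    (hs : s ∈ posRootsC n) (h : ξ ⬝ᵥ s < 0) : ξ + s ∈ posRootsC n := by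
  rcases mem_posRootsC_iff.1 hs with ⟨k, l, hkl, rfl⟩ | ⟨k, l, rfl⟩
  · rw [dotProduct_sub, dotProduct_stdBasis, dotProduct_stdBasis, sub_neg] at h
    exact add_sub_mem_posRootsC_of_apply_lt hξ hkl h
  · rw [dotProduct_add, dotProduct_stdBasis, dotProduct_stdBasis] at h
    exact add_add_mem_posRootsC_of_apply_add_neg hξ h

theorem dotProduct_pos_of_mem_posRootsC {v : Fin n → ℤ} (hv : v ∈ posRootsC n) :
    0 < v ⬝ᵥ fun i => (n : ℤ) - i := by
  rcases mem_posRootsC_iff.1 hv with ⟨a, b, hab, rfl⟩ | ⟨a, b, rfl⟩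
  · rw [sub_dotProduct, stdBasis_dotProduct, stdBasis_dotProduct]
    have := Fin.lt_def.1 hab
    omega
  · rw [add_dotProduct, stdBasis_dotProduct, stdBasis_dotProduct]
    omega

theorem add_ne_zero_of_mem_posRootsC {ξ ζ : Fin n → ℤ} (hξ : ξ ∈ posRootsC n)
    (hζ : ζ ∈ posRootsC n) : ξ + ζ ≠ 0 := by
  intro h
  have := add_dotProduct ξ ζ fun i => (n : ℤ) - i
  rw [h, zero_dotProduct] at this
  linarith [dotProduct_pos_of_mem_posRootsC hξ, dotProduct_pos_of_mem_posRootsC hζ]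

theorem even_sum_of_mem_posRootsC {v : Fin n → ℤ} (hv : v ∈ posRootsC n) : Even (∑ i, v i) := by
  rcases mem_posRootsC_iff.1 hv with ⟨a, b, -, rfl⟩ | ⟨a, b, rfl⟩ <;>
    simp [stdBasis, Finset.sum_add_distrib]

theorem eq_zero_or_eq_single_of_dotProduct_self_le_one {ι : Type*} [Fintype ι] [DecidableEq ι]
    {u : ι → ℤ} (hu : u ⬝ᵥ u ≤ 1) :
    u = 0 ∨ ∃ k, u = Pi.single k 1 ∨ u = -Pi.single k 1 := by
  by_cases h0 : u = 0
  · exact Or.inl h0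
  obtain ⟨k, hk⟩ : ∃ k, u k ≠ 0 := Function.ne_iff.1 h0
  have hsplit : u ⬝ᵥ u = u k * u k + ∑ i ∈ Finset.univ.erase k, u i * u i :=
    (Finset.add_sum_erase _ _ (Finset.mem_univ k)).symm
  have hrest_nonneg : 0 ≤ ∑ i ∈ Finset.univ.erase k, u i * u i :=
    Finset.sum_nonneg fun i _ => mul_self_nonneg (u i)
  have hk_pos : 0 < u k * u k := mul_self_pos.2 hk
  have hrest : ∀ i ≠ k, u i = 0 := by
    intro i hi
    have := (Finset.sum_eq_zero_iff_of_nonneg fun i _ => mul_self_nonneg (u i)).1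
      (by linarith) i (Finset.mem_erase.2 ⟨hi, Finset.mem_univ i⟩)
    exact mul_self_eq_zero.1 this
  have hu_single : u = Pi.single k (u k) := by
    ext i
    by_cases hi : i = k
    · subst hi; simp
    · simp [hi, hrest i hi]
  have : u k = 1 ∨ u k = -1 := by
    have : -1 ≤ u k ∧ u k ≤ 1 := ⟨by nlinarith, by nlinarith⟩
    omega
  right
  refine ⟨k, this.imp (fun h => ?_) (fun h => ?_)⟩
  · rw [hu_single, h]
  · rw [hu_single, h, Pi.single_neg]

end

/-- **Lemma 6, type C.** There is no decomposition
`α_max = ξ + ζ + Σ_{s∈S} m_s·s` with `ξ, ζ ∈ Δ_+`, `S` a nonempty set of simple roots,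
`m_s ≥ 1`, such that `ξ + ζ ∉ Δ_+` and `ξ + s ∉ Δ_+`, `ζ + s ∉ Δ_+` for all `s ∈ S`.
Here `α_max = 2e_1`. -/
theorem no_decomposition_typeC (n : ℕ) (hn : 2 ≤ n) :
    ¬ ∃ (ξ ζ : Fin n → ℤ) (S : Finset (Fin n → ℤ)) (m : (Fin n → ℤ) → ℕ),
        ξ ∈ posRootsC n ∧ ζ ∈ posRootsC n ∧
        S.Nonempty ∧ (↑S : Set (Fin n → ℤ)) ⊆ simpleRootsC n hn ∧ (∀ s ∈ S, 1 ≤ m s) ∧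
        (2 : ℤ) • stdBasis n ⟨0, by omega⟩ =
          ξ + ζ + ∑ s ∈ S, (m s : ℤ) • s ∧
        ξ + ζ ∉ posRootsC n ∧
        ∀ s ∈ S, ξ + s ∉ posRootsC n ∧ ζ + s ∉ posRootsC n := by
  rintro ⟨ξ, ζ, S, m, hξ, hζ, -, hS, -, hdecomp, hτ, hstring⟩
  set i₀ : Fin n := ⟨0, by omega⟩
  have hcone : 0 ≤ (ξ + ζ) ⬝ᵥ ∑ s ∈ S, (m s : ℤ) • s := by
    rw [dotProduct_sum]
    refine Finset.sum_nonneg fun s hs => ?_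
    have hs' := simpleRootsC_subset_posRootsC hn (hS hs)
    have hξs := not_lt.1 (mt (add_mem_posRootsC_of_dotProduct_neg hξ hs') (hstring s hs).1)
    have hζs := not_lt.1 (mt (add_mem_posRootsC_of_dotProduct_neg hζ hs') (hstring s hs).2)
    rw [dotProduct_smul, add_dotProduct]
    exact smul_nonneg (Nat.cast_nonneg _) (add_nonneg hξs hζs)
  have hunit : (ξ + ζ - stdBasis n i₀) ⬝ᵥ (ξ + ζ - stdBasis n i₀) ≤ 1 := by
    rw [eq_sub_of_add_eq' hdecomp.symm] at hcone
    simp only [dotProduct_sub, sub_dotProduct, dotProduct_smul, smul_eq_mul, dotProduct_stdBasis,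
      stdBasis_dotProduct, stdBasis_apply, if_true] at hcone ⊢
    linarith
  rcases eq_zero_or_eq_single_of_dotProduct_self_le_one hunit with h | ⟨k, h | h⟩ <;>
    rw [sub_eq_iff_eq_add] at h
  · have := (even_sum_of_mem_posRootsC hξ).add (even_sum_of_mem_posRootsC hζ)
    simp [← Finset.sum_add_distrib, ← Pi.add_apply, h, stdBasis] at this
  · exact hτ (h ▸ add_mem_posRootsC k i₀)
  · rw [neg_add_eq_sub] at h
    by_cases hk : k = i₀
    · exact add_ne_zero_of_mem_posRootsC hξ hζ (by rw [h, hk]; exact sub_self _)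
    · exact hτ (h ▸ sub_mem_posRootsC ((Fin.le_def.2 k.val.zero_le).lt_of_ne' hk))
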